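/- Let a : ℤ → ℂ be not generic, let v ∈ a^⊥ be nonzero with ω(v) minimal among all nonzero elements of a^⊥, and let v' ∈ a^⊥ be nonzero with ω(v') = ω(v). Then v' is a nonzero scalar multiple of some shift v^{(n)} of v. -/

import Mathlib

/-- For `x : ℤ → ℂ` and `n : ℤ`, the shift `x^{(n)}` is `i ↦ x (i + n)`. -/
def shiftFun (a : ℤ → ℂ) (n : ℤ) : ℤ → ℂ := fun i => a (i + n)

/-- The shift of a finitely supported function `v : ℤ →₀ ℂ`:
`(shiftV v n) i = v (i + n)`. -/
noncomputable def shiftV (v : ℤ →₀ ℂ) (n : ℤ) : ℤ →₀ ℂ :=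
  Finsupp.equivMapDomain (Equiv.addRight n).symm v

/-- The shift, as a linear map. -/
noncomputable def shiftVL (n : ℤ) : (ℤ →₀ ℂ) →ₗ[ℂ] (ℤ →₀ ℂ) :=
  (Finsupp.domLCongr (Equiv.addRight n).symm).toLinearMap

/-- `a^⊥`: the subspace of all `v ∈ ℤ →₀ ℂ` such that `⟨a, v^{(n)}⟩ = 0` for all
`n ∈ ℤ`, where `⟨a, w⟩ = ∑ i, a i * w i`. -/
noncomputable def perp (a : ℤ → ℂ) : Submodule ℂ (ℤ →₀ ℂ) :=
  ⨅ n : ℤ, LinearMap.ker ((Finsupp.linearCombination ℂ a).comp (shiftVL n))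

/-- `ω(v) = r(v) - l(v)`, the difference between the maximum and the minimum of
the support of `v` (junk value `0` for `v = 0`). -/
noncomputable def omegaV (v : ℤ →₀ ℂ) : ℕ :=
  ((WithBot.unbotD 0 v.support.max) - (WithTop.untopD 0 v.support.min)).toNat

/-!
Normalise `v` and `v'` at the left end of their supports: with `n = l(v) - l(v')` and
`c = v'_{l(v')} / v_{l(v)}`, the vector `w = v' - c • v^{(n)}` lies in the shift-invariant
space `a^⊥`, vanishes at `l(v')`, and is supported in `[l(v'), r(v')]` because `ω(v) = ω(v')`.
So `w = 0` or `ω(w) < ω(v)`, and minimality of `ω(v)` excludes the second case.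
-/

open Finset

lemma shiftV_apply (v : ℤ →₀ ℂ) (n i : ℤ) : shiftV v n i = v (i + n) := rfl

lemma shiftV_shiftV (v : ℤ →₀ ℂ) (n m : ℤ) :
    shiftV (shiftV v n) m = shiftV v (m + n) := by
  ext i
  simp [shiftV_apply, add_assoc]

lemma mem_perp_iff {a : ℤ → ℂ} {v : ℤ →₀ ℂ} :
    v ∈ perp a ↔ ∀ n : ℤ, Finsupp.linearCombination ℂ a (shiftV v n) = 0 := by
  simp only [perp, Submodule.mem_iInf, LinearMap.mem_ker, LinearMap.comp_apply]
  rfl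

lemma shiftV_mem_perp {a : ℤ → ℂ} {v : ℤ →₀ ℂ} (hv : v ∈ perp a) (n : ℤ) :
    shiftV v n ∈ perp a := by
  rw [mem_perp_iff] at hv ⊢
  intro m
  rw [shiftV_shiftV]
  exact hv (m + n)

lemma support_shiftV_subset_Icc {v : ℤ →₀ ℂ} {l r : ℤ} (h : v.support ⊆ Icc l r)
    (n : ℤ) :
    (shiftV v n).support ⊆ Icc (l - n) (r - n) := by
  intro i hi
  have hin : i + n ∈ v.support := by
    simpa only [Finsupp.mem_support_iff, shiftV_apply] using hi
  have := mem_Icc.1 (h hin)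
  rw [mem_Icc]
  omega

lemma Finset.subset_Icc_min'_max' {α : Type*} [LinearOrder α] [LocallyFiniteOrder α]
    {s : Finset α} (h : s.Nonempty) :
    s ⊆ Icc (s.min' h) (s.max' h) :=
  fun _ hi => mem_Icc.2 ⟨s.min'_le _ hi, s.le_max' _ hi⟩

lemma omegaV_eq_max'_sub_min' {v : ℤ →₀ ℂ} (h : v.support.Nonempty) :
    (omegaV v : ℤ) = v.support.max' h - v.support.min' h := by
  rw [omegaV, ← coe_max' h, ← coe_min' h, WithBot.unbotD_coe, WithTop.untopD_coe]
  exact Int.toNat_of_nonneg (sub_nonneg.2 (min'_le_max' _ h))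

lemma omegaV_le_of_support_subset_Icc {v : ℤ →₀ ℂ} (hv : v ≠ 0) {l r : ℤ}
    (h : v.support ⊆ Icc l r) : (omegaV v : ℤ) ≤ r - l := by
  have hs := Finsupp.support_nonempty_iff.2 hv
  have hmin := mem_Icc.1 (h (min'_mem _ hs))
  have hmax := mem_Icc.1 (h (max'_mem _ hs))
  rw [omegaV_eq_max'_sub_min' hs]
  omega

lemma exists_omegaV_sub_smul_shiftV_lt {v v' : ℤ →₀ ℂ} (hv0 : v ≠ 0) (hv'0 : v' ≠ 0)
    (homega : omegaV v' = omegaV v) :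
    ∃ c ≠ (0 : ℂ), ∃ n : ℤ,
      v' - c • shiftV v n ≠ 0 → omegaV (v' - c • shiftV v n) < omegaV v := by
  have hs := Finsupp.support_nonempty_iff.2 hv0
  have hs' := Finsupp.support_nonempty_iff.2 hv'0
  have hωv := omegaV_eq_max'_sub_min' hs
  have hωv' := omegaV_eq_max'_sub_min' hs'
  set l := v.support.min' hs
  set l' := v'.support.min' hs'
  set r' := v'.support.max' hs'
  have hvl : v l ≠ 0 := Finsupp.mem_support_iff.1 (min'_mem _ hs)
  have hv'l' : v' l' ≠ 0 := Finsupp.mem_support_iff.1 (min'_mem _ hs')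
  refine ⟨v' l' / v l, div_ne_zero hv'l' hvl, l - l', fun hw0 => ?_⟩
  set w := v' - (v' l' / v l) • shiftV v (l - l')
  have hwl' : w l' = 0 := by
    simp [w, shiftV_apply, div_mul_cancel₀ _ hvl]
  have hsupp : w.support ⊆ Icc (l' + 1) r' := by
    intro i hi
    have hi' : i ∈ Icc l' r' := by
      rcases mem_union.1 (Finsupp.support_sub hi) with h | h
      · exact subset_Icc_min'_max' hs' h
      · have := support_shiftV_subset_Icc (subset_Icc_min'_max' hs) (l - l')
          (Finsupp.support_smul h)
        rw [mem_Icc] at this ⊢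
        omega
    have hil' : i ≠ l' := by
      rintro rfl
      exact Finsupp.mem_support_iff.1 hi hwl'
    rw [mem_Icc] at hi' ⊢
    omega
  have := omegaV_le_of_support_subset_Icc hw0 hsupp
  omega

theorem eq_smul_shift_of_omega_eq_general (a : ℤ → ℂ)
    (v : ℤ →₀ ℂ) (hv : v ∈ perp a) (hv0 : v ≠ 0)
    (hmin : ∀ w ∈ perp a, w ≠ 0 → omegaV v ≤ omegaV w)
    (v' : ℤ →₀ ℂ) (hv' : v' ∈ perp a) (hv'0 : v' ≠ 0)
    (homega : omegaV v' = omegaV v) :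
    ∃ (c : ℂ) (n : ℤ), c ≠ 0 ∧ v' = c • shiftV v n := by
  obtain ⟨c, hc, n, hlt⟩ := exists_omegaV_sub_smul_shiftV_lt hv0 hv'0 homega
  refine ⟨c, n, hc, sub_eq_zero.1 (by_contra fun hw0 => ?_)⟩
  have hw : v' - c • shiftV v n ∈ perp a :=
    sub_mem hv' (Submodule.smul_mem _ c (shiftV_mem_perp hv n))
  exact (hmin _ hw hw0).not_gt (hlt hw0)

/-- If `a` is not generic, `v ∈ a^⊥` is nonzero with `ω(v)` minimal, and
`v' ∈ a^⊥` is nonzero with `ω(v') = ω(v)`, then `v'` is a nonzero scalar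
multiple of some shift of `v`. -/
theorem eq_smul_shift_of_omega_eq (a : ℤ → ℂ)
    (ha : ¬ LinearIndependent ℂ (fun n : ℤ => shiftFun a n))
    (v : ℤ →₀ ℂ) (hv : v ∈ perp a) (hv0 : v ≠ 0)
    (hmin : ∀ w ∈ perp a, w ≠ 0 → omegaV v ≤ omegaV w)
    (v' : ℤ →₀ ℂ) (hv' : v' ∈ perp a) (hv'0 : v' ≠ 0)
    (homega : omegaV v' = omegaV v) :
    ∃ (c : ℂ) (n : ℤ), c ≠ 0 ∧ v' = c • shiftV v n :=
  eq_smul_shift_of_omega_eq_general a v hv hv0 hmin v' hv' hv'0 homega
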